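/- Let Σ = H₁ ∪ … ∪ H_q be a finite union of affine hyperplanes in ℝⁿ that is invariant under the reflection σ_i about each H_i. Then the group W(Σ) generated by σ₁,…,σ_q permutes the hyperplanes H₁,…,H_q, and its image in the permutations of {H₁,…,H_q} together with the pointwise stabilizer structure forces W(Σ) to be finite. -/

import Mathlib

/-!
Every element `g` of `W` preserves `Σ`, so it maps the hyperplane `Hᵢ` into the finite union of
the `Hⱼ`. An affine subspace over an infinite field covered by finitely many affine subspaces lies
in one of them, so `g(Hᵢ) = Hⱼ` for some `j`, and the linear part of `g` sends `νᵢ` to `±νⱼ`.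
Moreover `g x - x` lies in the span `V` of the normals, as it does for each reflection. If two
elements of `W` agree on all these data, the quotient `h` of them fixes every `νᵢ` and every `Hᵢ`;
then `h x - x` lies in `V` and is orthogonal to every `νᵢ`, so `h = 1`. Hence `W` injects into a
finite set.
-/

open scoped RealInnerProductSpace
open AffineMap

namespace AffineSubspace

variable {k V P : Type*} [Field k] [AddCommGroup V] [Module k V] [AddTorsor V P]

theorem lineMap_mem_of_lineMap_mem_of_ne {B : AffineSubspace k P} {x y : P} {t t' : k}
    (hne : t ≠ t') (ht : lineMap x y t ∈ B) (ht' : lineMap x y t' ∈ B) (s : k) :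
    lineMap x y s ∈ B := by
  have hs : lineMap t t' ((s - t) / (t' - t)) = s := by
    rw [lineMap_apply_ring]
    field_simp [sub_ne_zero.2 hne.symm]
    ring
  rw [← hs, apply_lineMap]
  exact lineMap_mem _ ht ht'

theorem exists_mem_forall_notMem [Infinite k] {ι : Type*} {A : AffineSubspace k P}
    (hA : (A : Set P).Nonempty) {B : ι → AffineSubspace k P} (s : Finset ι)
    (h : ∀ j ∈ s, ∃ x ∈ A, x ∉ B j) : ∃ x ∈ A, ∀ j ∈ s, x ∉ B j := by
  classical
  induction s using Finset.induction_on with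
  | empty =>
    obtain ⟨x, hx⟩ := hA
    exact ⟨x, hx, by simp⟩
  | insert j₀ s _ ih =>
    obtain ⟨y, hyA, hy⟩ := ih fun j hj => h j (Finset.mem_insert_of_mem hj)
    obtain ⟨x, hxA, hx⟩ := h j₀ (Finset.mem_insert_self _ _)
    -- a line not contained in `B j` meets it at most once
    have hmeet : ∀ j ∈ insert j₀ s, {t : k | lineMap x y t ∈ B j}.Subsingleton := by
      intro j hj t ht t' ht'
      by_contra hne
      have hxy : x ∉ B j ∨ y ∉ B j := by
        rcases Finset.mem_insert.1 hj with rfl | hj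
        exacts [Or.inl hx, Or.inr (hy j hj)]
      rcases hxy with hxy | hxy
      · exact hxy (by simpa using lineMap_mem_of_lineMap_mem_of_ne hne ht ht' 0)
      · exact hxy (by simpa using lineMap_mem_of_lineMap_mem_of_ne hne ht ht' 1)
    obtain ⟨t, ht⟩ := ((insert j₀ s).finite_toSet.biUnion fun j hj =>
      (hmeet j hj).finite).exists_notMem
    exact ⟨lineMap x y t, lineMap_mem t hxA hyA, fun j hj hmem => ht (Set.mem_biUnion hj hmem)⟩

theorem exists_le_of_subset_iUnion [Infinite k] {ι : Type*} [Finite ι] {A : AffineSubspace k P}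
    (hA : (A : Set P).Nonempty) {B : ι → AffineSubspace k P}
    (h : (A : Set P) ⊆ ⋃ j, (B j : Set P)) : ∃ j, A ≤ B j := by
  have := Fintype.ofFinite ι
  by_contra! hnot
  have hout : ∀ j ∈ Finset.univ, ∃ x ∈ A, x ∉ B j := fun j _ => Set.not_subset.1 (hnot j)
  obtain ⟨x, hxA, hx⟩ := exists_mem_forall_notMem hA Finset.univ hout
  obtain ⟨j, hj⟩ := Set.mem_iUnion.1 (h hxA)
  exact hx j (Finset.mem_univ j) hj

end AffineSubspace

namespace AffineIsometryEquiv

variable {𝕜 V P : Type*} [NormedField 𝕜] [SeminormedAddCommGroup V] [NormedSpace 𝕜 V]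
  [PseudoMetricSpace P] [NormedAddTorsor V P]

variable (𝕜) in
def setStabilizer (s : Set P) : Subgroup (P ≃ᵃⁱ[𝕜] P) where
  carrier := {g | g '' s = s}
  one_mem' := by simp [coe_one]
  mul_mem' := by
    intro g g' hg hg'
    change (g ∘ g') '' s = s
    rw [Set.image_comp, hg', hg]
  inv_mem' := by
    intro g hg
    change g.symm '' s = s
    conv_lhs => rw [← hg]
    exact g.toHomeomorph.symm_image_image s

def displacementSubgroup (K : Submodule 𝕜 V) : Subgroup (P ≃ᵃⁱ[𝕜] P) where
  carrier := {g | ∀ x, g x -ᵥ x ∈ K}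
  one_mem' := by simp [coe_one]
  mul_mem' := by
    intro g g' hg hg' x
    rw [coe_mul, Function.comp_apply, ← vsub_add_vsub_cancel _ (g' x)]
    exact K.add_mem (hg _) (hg' x)
  inv_mem' := by
    intro g hg x
    have := hg (g⁻¹ x)
    rw [coe_inv] at this ⊢
    rw [apply_symm_apply, ← neg_vsub_eq_vsub_rev] at this
    simpa using K.neg_mem this

end AffineIsometryEquiv

section Hyperplane

variable {E : Type*} [NormedAddCommGroup E] [InnerProductSpace ℝ E]

noncomputable def hyperplane (p v : E) : AffineSubspace ℝ E :=
  AffineSubspace.mk' p (ℝ ∙ v)ᗮ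

theorem mem_hyperplane {p v x : E} : x ∈ hyperplane p v ↔ ⟪x - p, v⟫ = 0 := by
  rw [hyperplane, AffineSubspace.mem_mk', vsub_eq_sub,
    Submodule.mem_orthogonal_singleton_iff_inner_left]

theorem coe_hyperplane (p v : E) : (hyperplane p v : Set E) = {x | ⟪x - p, v⟫ = 0} :=
  Set.ext fun _ => mem_hyperplane

theorem self_mem_hyperplane (p v : E) : p ∈ hyperplane p v :=
  AffineSubspace.self_mem_mk' p _

theorem image_hyperplane (g : E ≃ᵃⁱ[ℝ] E) (p v : E) :
    g '' hyperplane p v = hyperplane (g p) (g.linearIsometryEquiv v) := by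
  ext x
  obtain ⟨y, rfl⟩ := g.surjective x
  rw [g.injective.mem_set_image, SetLike.mem_coe, SetLike.mem_coe, mem_hyperplane,
    mem_hyperplane, ← vsub_eq_sub, ← vsub_eq_sub, ← g.map_vsub,
    LinearIsometryEquiv.inner_map_map]

theorem exists_smul_eq_of_hyperplane_le {a b u v : E} (h : hyperplane a u ≤ hyperplane b v) :
    ∃ c : ℝ, c • u = v := by
  have hdir := AffineSubspace.direction_le h
  simp only [hyperplane, AffineSubspace.direction_mk'] at hdir
  have hspan : ℝ ∙ v ≤ ℝ ∙ u := by
    simpa only [Submodule.orthogonal_orthogonal] using Submodule.orthogonal_le hdir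
  exact Submodule.mem_span_singleton.1 (hspan (Submodule.mem_span_singleton_self v))

theorem hyperplane_eq_of_le {a b u v : E} (hv : v ≠ 0) (h : hyperplane a u ≤ hyperplane b v) :
    hyperplane a u = hyperplane b v := by
  obtain ⟨c, rfl⟩ := exists_smul_eq_of_hyperplane_le h
  have hc : IsUnit c := isUnit_iff_ne_zero.2 (left_ne_zero_of_smul hv)
  refine AffineSubspace.eq_of_direction_eq_of_nonempty_of_le ?_ ⟨a, self_mem_hyperplane a u⟩ h
  simp only [hyperplane, AffineSubspace.direction_mk', Submodule.span_singleton_smul_eq hc]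

theorem exists_image_hyperplane_eq {ι : Type*} [Finite ι] {p ν : ι → E} (hν : ∀ i, ‖ν i‖ = 1)
    {g : E ≃ᵃⁱ[ℝ] E}
    (hg : g '' ⋃ j, (hyperplane (p j) (ν j) : Set E) ⊆ ⋃ j, hyperplane (p j) (ν j))
    (i : ι) : ∃ j, g '' hyperplane (p i) (ν i) = hyperplane (p j) (ν j) ∧
      (g.linearIsometryEquiv (ν i) = ν j ∨ g.linearIsometryEquiv (ν i) = -ν j) := by
  have hcover : (hyperplane (g (p i)) (g.linearIsometryEquiv (ν i)) : Set E) ⊆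
      ⋃ j, hyperplane (p j) (ν j) := by
    rw [← image_hyperplane]
    exact (Set.image_mono
      (Set.subset_iUnion (fun j => (hyperplane (p j) (ν j) : Set E)) i)).trans hg
  obtain ⟨j, hj⟩ := AffineSubspace.exists_le_of_subset_iUnion ⟨_, self_mem_hyperplane _ _⟩ hcover
  obtain ⟨c, hc⟩ := exists_smul_eq_of_hyperplane_le hj
  have hc_abs : |c| = 1 := by
    simpa [norm_smul, hν] using congrArg norm hc
  have hνj : ν j ≠ 0 := norm_ne_zero_iff.1 (by simp [hν])
  refine ⟨j, by rw [image_hyperplane, hyperplane_eq_of_le hνj hj], ?_⟩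
  rcases abs_eq zero_le_one |>.1 hc_abs with rfl | rfl
  · exact Or.inl (by simpa using hc)
  · exact Or.inr (by rw [← hc]; simp)

theorem AffineIsometryEquiv.eq_one_of_forall_sub_mem_span {ι : Type*} {p ν : ι → E}
    {h : E ≃ᵃⁱ[ℝ] E} (hV : ∀ x, h x - x ∈ Submodule.span ℝ (Set.range ν))
    (hL : ∀ i, h.linearIsometryEquiv (ν i) = ν i) (hp : ∀ i, h (p i) ∈ hyperplane (p i) (ν i)) :
    h = 1 := by
  ext x
  set d := h x - x
  have hd : ∀ i, ⟪ν i, d⟫ = 0 := by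
    intro i
    have hpi := mem_hyperplane.1 (hp i)
    have hiso : ⟪h x - h (p i), ν i⟫ = ⟪x - p i, ν i⟫ := by
      have := h.linearIsometryEquiv.inner_map_map (x -ᵥ p i) (ν i)
      rwa [hL, h.map_vsub, vsub_eq_sub, vsub_eq_sub] at this
    calc ⟪ν i, d⟫ = ⟪h x - h (p i), ν i⟫ + ⟪h (p i) - p i, ν i⟫ - ⟪x - p i, ν i⟫ := by
          rw [real_inner_comm]; simp only [d, inner_sub_left]; ring
      _ = 0 := by rw [hiso, hpi]; ring
  have hdd : d ∈ (ℝ ∙ d)ᗮ := Submodule.span_le.2 (Set.range_subset_iff.2 fun i =>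
    Submodule.mem_orthogonal_singleton_iff_inner_left.2 (hd i)) (hV x)
  have hd0 : d = 0 :=
    inner_self_eq_zero.1 (Submodule.mem_orthogonal_singleton_iff_inner_left.1 hdd)
  simpa [d, sub_eq_zero] using hd0

theorem finite_of_le_setStabilizer_of_le_displacementSubgroup {ι : Type*} [Finite ι] {p ν : ι → E}
    (hν : ∀ i, ‖ν i‖ = 1) (W : Subgroup (E ≃ᵃⁱ[ℝ] E))
    (hstab : W ≤ AffineIsometryEquiv.setStabilizer ℝ (⋃ j, (hyperplane (p j) (ν j) : Set E)))
    (hV : W ≤ AffineIsometryEquiv.displacementSubgroup (Submodule.span ℝ (Set.range ν))) :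
    Finite W := by
  let data : (E ≃ᵃⁱ[ℝ] E) → ι → Set E × E := fun g i =>
    (g '' hyperplane (p i) (ν i), g.linearIsometryEquiv (ν i))
  let target : Set (ι → Set E × E) := Set.univ.pi fun _ =>
    Set.range (fun j => (hyperplane (p j) (ν j) : Set E)) ×ˢ (Set.range ν ∪ Set.range (-ν))
  have hfin : target.Finite := Set.Finite.pi fun _ =>
    (Set.finite_range _).prod ((Set.finite_range _).union (Set.finite_range _))
  have hmaps : data '' W ⊆ target := by
    rintro _ ⟨g, hg, rfl⟩ i -
    obtain ⟨j, hHj, hνj | hνj⟩ := exists_image_hyperplane_eq hν (hstab hg).subset i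
    · exact ⟨⟨j, hHj.symm⟩, Or.inl ⟨j, hνj.symm⟩⟩
    · exact ⟨⟨j, hHj.symm⟩, Or.inr ⟨j, hνj.symm⟩⟩
  have hinj : Set.InjOn data W := by
    intro g hg g' hg' hgg'
    have hH i : g '' hyperplane (p i) (ν i) = g' '' hyperplane (p i) (ν i) :=
      congrArg Prod.fst (congrFun hgg' i)
    have hL i : g.linearIsometryEquiv (ν i) = g'.linearIsometryEquiv (ν i) :=
      congrArg Prod.snd (congrFun hgg' i)
    refine (inv_mul_eq_one.1 (AffineIsometryEquiv.eq_one_of_forall_sub_mem_span (p := p)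
      (hV (W.mul_mem (W.inv_mem hg') hg)) (fun i => ?_) (fun i => ?_))).symm
    · change g'.linearIsometryEquiv.symm (g.linearIsometryEquiv (ν i)) = ν i
      rw [hL, LinearIsometryEquiv.symm_apply_apply]
    · obtain ⟨y, hy, hgy⟩ : g (p i) ∈ g' '' hyperplane (p i) (ν i) :=
        hH i ▸ Set.mem_image_of_mem g (self_mem_hyperplane (p i) (ν i))
      change g'.symm (g (p i)) ∈ hyperplane (p i) (ν i)
      rwa [← hgy, AffineIsometryEquiv.symm_apply_apply]
  exact Set.finite_coe_iff.2 ((hfin.subset hmaps).of_finite_image hinj)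

end Hyperplane

/-- Let `Σ = H₁ ∪ ⋯ ∪ H_q` be a finite union of affine hyperplanes in `ℝⁿ` invariant under
the reflection `σᵢ` about each `Hᵢ` (a Coxeter system).  Then every element of the group
`W(Σ)` generated by the reflections permutes the hyperplanes, and `W(Σ)` is finite. -/
theorem stmt11 {n : ℕ} (q : ℕ) (p ν : Fin q → EuclideanSpace ℝ (Fin n))
    (hν : ∀ i, ‖ν i‖ = 1)
    (H : Fin q → Set (EuclideanSpace ℝ (Fin n)))
    (hH : ∀ i, H i = {x | ⟪x - p i, ν i⟫ = 0})
    (refl : Fin q → (EuclideanSpace ℝ (Fin n) ≃ᵃⁱ[ℝ] EuclideanSpace ℝ (Fin n)))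
    (hrefl : ∀ i x, refl i x = x - (2 * ⟪x - p i, ν i⟫) • ν i)
    (hinv : ∀ i, (refl i) '' (⋃ j, H j) = ⋃ j, H j)
    (W : Subgroup (EuclideanSpace ℝ (Fin n) ≃ᵃⁱ[ℝ] EuclideanSpace ℝ (Fin n)))
    (hW : W = Subgroup.closure (Set.range refl)) :
    (∀ g ∈ W, ∀ i, ∃ j, (g : EuclideanSpace ℝ (Fin n) → EuclideanSpace ℝ (Fin n)) '' H i = H j)
      ∧ Finite W := by
  obtain rfl : H = fun i => (hyperplane (p i) (ν i) : Set _) :=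
    funext fun i => (hH i).trans (coe_hyperplane (p i) (ν i)).symm
  subst hW
  have hstab : Subgroup.closure (Set.range refl) ≤
      AffineIsometryEquiv.setStabilizer ℝ (⋃ j, (hyperplane (p j) (ν j) : Set _)) :=
    (Subgroup.closure_le _).2 (Set.range_subset_iff.2 hinv)
  have hdisp : Subgroup.closure (Set.range refl) ≤
      AffineIsometryEquiv.displacementSubgroup (Submodule.span ℝ (Set.range ν)) := by
    refine (Subgroup.closure_le _).2 (Set.range_subset_iff.2 fun i x => ?_)
    rw [vsub_eq_sub, hrefl, sub_sub_cancel_left]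
    exact neg_mem (Submodule.smul_mem _ _ (Submodule.subset_span (Set.mem_range_self i)))
  refine ⟨fun g hg i => ?_, finite_of_le_setStabilizer_of_le_displacementSubgroup hν _ hstab hdisp⟩
  obtain ⟨j, hj, -⟩ := exists_image_hyperplane_eq hν (hstab hg).subset i
  exact ⟨j, hj⟩
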